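/- Let α, c > 0 be constants, let A ⊆ [n] with |A| = αn, and let x ∈ {0,1}^n. Let (1-ε')αn ≤ i ≤ αn with 0 < ε' < 1 and ε'n ≥ 2ec. Define rk(z) := |{j ∈ A : z_j = 1}|, and let y be obtained from x by standard bit mutation with rate c/n. If rk(x) < i, then at least one of the following two inequalities holds: Pr[rk(y) ≥ i] ≤ 2^{-ε'αn}, or Pr[rk(y) ≥ i+1] / Pr[rk(y) ≥ i] ≤ 2ε'αc. -/

import Mathlib

open MeasureTheory
open scoped ENNReal NNReal

namespace EA

attribute [local instance] Classical.propDecidable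

/-- A search point: a bit string of length `n`. -/
abbrev Pt (n : ℕ) := Fin n → Bool

/-- Number of one-bits of `x` inside the index set `A`. -/
def onesIn {n : ℕ} (A : Finset (Fin n)) (x : Pt n) : ℕ :=
  (A.filter fun i => x i = true).card

/-- Number of zero-bits of `x` inside the index set `A`. -/
def zerosIn {n : ℕ} (A : Finset (Fin n)) (x : Pt n) : ℕ :=
  (A.filter fun i => x i = false).card

/-- The OneMax value: the number of one-bits. -/
def OM {n : ℕ} (x : Pt n) : ℕ := onesIn Finset.univ x

/-- Density `d(A, x)` of zero-bits of `x` in `A`. -/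
noncomputable def dens {n : ℕ} (A : Finset (Fin n)) (x : Pt n) : ℝ :=
  (zerosIn A x : ℝ) / (A.card : ℝ)

/-- Hamming distance: the number of bits in which `x` and `y` differ. -/
def hamming {n : ℕ} (x y : Pt n) : ℕ :=
  (Finset.univ.filter fun i : Fin n => x i ≠ y i).card

/-! ### Mutation as a probability mass function -/

/-- Bernoulli distribution with parameter `min p 1`. -/
noncomputable def bern (p : ℝ≥0∞) : PMF Bool := PMF.bernoulli (min p 1).toNNReal
  (by simpa using ENNReal.toNNReal_mono ENNReal.one_ne_top (min_le_right p 1))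

/-- Product of `k` independent Bernoulli random bits. -/
noncomputable def piBern : (k : ℕ) → ℝ≥0∞ → PMF (Fin k → Bool)
  | 0, _ => PMF.pure fun i => i.elim0
  | k + 1, p => (bern p).bind fun b => (piBern k p).map (Fin.cons b)

/-- Standard bit mutation with rate `c/n`: each bit of `x` is flipped independently
with probability `c/n`. -/
noncomputable def mutPMF (n : ℕ) (c : ℝ) (x : Pt n) : PMF (Pt n) :=
  (piBern n (ENNReal.ofReal (c / n))).map fun b i => xor (x i) (b i)

/-- The result of `d` consecutive independent standard bit mutations started at `x`. -/
noncomputable def mutChain (n : ℕ) (c : ℝ) : ℕ → Pt n → PMF (Pt n)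
  | 0, x => PMF.pure x
  | d + 1, x => (mutPMF n c x).bind (mutChain n c d)

/-! ### The random forest `F'` (and a single tree of it), as a Markov chain of PMFs.

A forest state is a list of vertices in order of creation; entry `some j` means the vertex
is a child of vertex `j`, and `none` means the vertex is a root. -/

/-- One round of the forest process: each existing vertex independently spawns a child with
probability `1/μ`, and one new root is added. -/
noncomputable def forestStep (μ : ℕ) (s : List (Option ℕ)) : PMF (List (Option ℕ)) :=
  (piBern s.length ((μ : ℝ≥0∞))⁻¹).map fun b =>
    s ++ (((List.finRange s.length).filter fun i => b i).map fun i => some i.1) ++ [none]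

/-- The random forest `F'`: in round `0` a single root; in each subsequent round each vertex
spawns a child with probability `1/μ` and a new root is added. -/
noncomputable def forestPMF (μ : ℕ) : ℕ → PMF (List (Option ℕ))
  | 0 => PMF.pure [none]
  | t + 1 => (forestPMF μ t).bind (forestStep μ)

/-- One round of the single-tree process: each existing vertex independently spawns a child
with probability `1/μ` (no new roots). -/
noncomputable def treeStep (μ : ℕ) (s : List (Option ℕ)) : PMF (List (Option ℕ)) :=
  (piBern s.length ((μ : ℝ≥0∞))⁻¹).map fun b =>
    s ++ (((List.finRange s.length).filter fun i => b i).map fun i => some i.1)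

/-- A single tree of the random forest `F'`. -/
noncomputable def treePMF (μ : ℕ) : ℕ → PMF (List (Option ℕ))
  | 0 => PMF.pure [none]
  | t + 1 => (treePMF μ t).bind (treeStep μ)

/-- Depth of vertex `i` in a forest state (with fuel). -/
def depthL (s : List (Option ℕ)) : ℕ → ℕ → ℕ
  | 0, _ => 0
  | fuel + 1, i =>
    match s.getD i none with
    | none => 0
    | some j => depthL s fuel j + 1

/-- Depth of vertex `i` in a forest state. -/
def depthOf (s : List (Option ℕ)) (i : ℕ) : ℕ := depthL s (i + 1) i

/-- The number of vertices of depth `d` in a forest state. -/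
def countDepth (s : List (Option ℕ)) (d : ℕ) : ℕ :=
  ((List.range s.length).filter fun i => depthOf s i == d).length

/-! ### The source of randomness.

The sample space is the interval `[0,1)` with Lebesgue measure; all the randomness used by the
algorithm is extracted from the binary digits of the sample `u ∈ [0,1)`, re-packaged into a
countable family of independent uniform random variables `unif u m ∈ [0,1)`. -/

/-- The `k`-th binary digit of `u ∈ [0,1)`. -/
noncomputable def bit (u : ℝ) (k : ℕ) : Bool := decide (⌊u * 2 ^ (k + 1)⌋₊ % 2 = 1)

/-- A countable family of independent uniform-`[0,1)` random variables extracted from the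
binary digits of `u`. -/
noncomputable def unif (u : ℝ) (m : ℕ) : ℝ :=
  ∑' k : ℕ, if bit u (Nat.pair m k) then ((1 : ℝ) / 2 ^ (k + 1)) else 0

/-- Independent uniforms, triple-indexed. -/
noncomputable def unifAt (u : ℝ) (a b c : ℕ) : ℝ := unif u (Nat.pair a (Nat.pair b c))

/-- The underlying probability measure: Lebesgue measure on `[0,1)`. -/
noncomputable def P : Measure ℝ := volume.restrict (Set.Ico (0 : ℝ) 1)

/-- A uniformly random element of `{0, ..., m-1}` obtained from a uniform `r ∈ [0,1)`. -/
noncomputable def pickN (r : ℝ) (m : ℕ) : ℕ := min ⌊r * m⌋₊ (m - 1)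

/-! ### The (μ+1)-EA -/

/-- A vertex (individual) identifier: `Sum.inl j` is the initial individual in slot `j`,
`Sum.inr t` is the offspring created in round `t`. -/
abbrev V := ℕ ⊕ ℕ

/-- Creation time of a vertex (used as recursion fuel). -/
def vtime : V → ℕ
  | Sum.inl _ => 0
  | Sum.inr t => t + 1

/-- Configuration of a run of the `(μ+1)`-EA on bit strings of length `n`: population size `μ`,
mutation parameter `c` (mutation rate `c/n`), fitness function `f`, initial population `pop₀`
(only slots `< μ` are relevant), and the distinguished set `A` (the current "hot topic")
defining the rank `rk x = onesIn A x`. -/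
structure Cfg (n : ℕ) where
  μ : ℕ
  c : ℝ
  f : Pt n → ℝ
  pop₀ : ℕ → Pt n
  A : Finset (Fin n)

namespace Cfg

variable {n : ℕ} (C : Cfg n)

/-- Rank of a search point: number of one-bits in `A`. -/
def rk (x : Pt n) : ℕ := onesIn C.A x

/-- Index of the parent selected (uniformly at random) in round `t`. -/
noncomputable def parentIdx (u : ℝ) (t : ℕ) : ℕ := pickN (unifAt u 0 t 0) C.μ

/-- Standard bit mutation performed in round `t`: each bit flips independently with
probability `c/n`. -/
noncomputable def mutate (u : ℝ) (t : ℕ) (x : Pt n) : Pt n :=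
  fun i => xor (x i) (decide (unifAt u 1 t i.1 < C.c / n))

/-- The `μ+1` candidates in round `t` (index `μ` is the new offspring), given state `s`. -/
noncomputable def cands (u : ℝ) (t : ℕ) (s : ℕ → Pt n × V) : ℕ → Pt n × V :=
  fun j => if j < C.μ then s j else (C.mutate u t (s (C.parentIdx u t)).1, Sum.inr t)

/-- The index (among the `μ+1` candidates) of the removed individual in round `t`:
an individual of minimal fitness, ties broken uniformly at random. -/
noncomputable def removedIdx (u : ℝ) (t : ℕ) (s : ℕ → Pt n × V) : ℕ :=
  let g := C.cands u t s
  let M := (Finset.range (C.μ + 1)).filter fun j =>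
    ∀ j' ∈ Finset.range (C.μ + 1), C.f (g j).1 ≤ C.f (g j').1
  (M.sort (· ≤ ·)).getD (pickN (unifAt u 2 t 0) M.card) 0

/-- One round of the `(μ+1)`-EA. -/
noncomputable def stepRun (u : ℝ) (t : ℕ) (s : ℕ → Pt n × V) : ℕ → Pt n × V :=
  fun j => if j = C.removedIdx u t s then C.cands u t s C.μ else s j

/-- The population (with origins of the individuals) after `t` rounds. -/
noncomputable def run (u : ℝ) : ℕ → ℕ → Pt n × V
  | 0 => fun j => (C.pop₀ j, Sum.inl j)
  | t + 1 => C.stepRun u t (run u t)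

/-- The parent (search point together with its origin vertex) selected in round `t`. -/
noncomputable def parentAt (u : ℝ) (t : ℕ) : Pt n × V := C.run u t (C.parentIdx u t)

/-- The offspring created in round `t`. -/
noncomputable def offspringAt (u : ℝ) (t : ℕ) : Pt n := C.mutate u t (C.parentAt u t).1

/-- The search point removed from the population in round `t`. -/
noncomputable def removedAt (u : ℝ) (t : ℕ) : Pt n :=
  (C.cands u t (C.run u t) (C.removedIdx u t (C.run u t))).1

/-- The search point associated with a vertex. -/
noncomputable def vpt (u : ℝ) : V → Pt n
  | Sum.inl j => C.pop₀ j
  | Sum.inr t => C.offspringAt u t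

/-- The parent vertex of a vertex (`none` for initial individuals). -/
noncomputable def vparent (u : ℝ) : V → Option V
  | Sum.inl _ => none
  | Sum.inr t => some (C.parentAt u t).2

/-- Whether a vertex identifier denotes an actual individual of the run. -/
def validV : V → Prop
  | Sum.inl j => j < C.μ
  | Sum.inr _ => True

/-- Auxiliary: follow parent pointers while the parent has rank at least `i`. -/
noncomputable def rootAux (u : ℝ) (i : ℕ) : ℕ → V → V
  | 0, v => v
  | fuel + 1, v =>
    match C.vparent u v with
    | none => v
    | some w => if i ≤ C.rk (C.vpt u w) then rootAux u i fuel w else v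

/-- The root, in the family forest `F_i`, of the tree containing vertex `v`. -/
noncomputable def rootIn (u : ℝ) (i : ℕ) (v : V) : V := C.rootAux u i (vtime v) v

/-- Auxiliary: depth with fuel. -/
noncomputable def depthAux (u : ℝ) (i : ℕ) : ℕ → V → ℕ
  | 0, _ => 0
  | fuel + 1, v =>
    match C.vparent u v with
    | none => 0
    | some w => if i ≤ C.rk (C.vpt u w) then depthAux u i fuel w + 1 else 0

/-- The depth of vertex `v` in the family forest `F_i` (roots have depth `0`). -/
noncomputable def depthIn (u : ℝ) (i : ℕ) (v : V) : ℕ := C.depthAux u i (vtime v) v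

/-- Whether vertex `v` is a root of the family forest `F_i`: it has rank at least `i` and
either no parent or a parent of rank less than `i`. -/
def isRootIn (u : ℝ) (i : ℕ) (v : V) : Prop :=
  i ≤ C.rk (C.vpt u v) ∧ (C.vparent u v).elim True fun w => C.rk (C.vpt u w) < i

/-- The number of individuals of rank at least `i` among initial individuals and the
offspring of the first `t` rounds (i.e. `|X_{≥ i}|` after `t` rounds). -/
noncomputable def numGe (u : ℝ) (i : ℕ) (t : ℕ) : ℕ :=
  ((Finset.range C.μ).filter fun j => i ≤ C.rk (C.pop₀ j)).card +
  ((Finset.range t).filter fun s => i ≤ C.rk (C.offspringAt u s)).card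

end Cfg

/-- The first time (possibly `⊤`) at which a predicate on rounds holds. -/
noncomputable def hitTime (p : ℕ → Prop) : ℕ∞ :=
  sInf {m : ℕ∞ | ∃ t : ℕ, m = t ∧ p t}

namespace Cfg

variable {n : ℕ} (C : Cfg n)

/-- The first round at which `X_{≥i}` is nonempty. -/
noncomputable def tFirst (u : ℝ) (i : ℕ) : ℕ∞ :=
  hitTime fun t => 1 ≤ C.numGe u i t

/-- The first round at which `|X_{≥i}|` reaches `x`. -/
noncomputable def tReach (u : ℝ) (i : ℕ) (x : ℝ) : ℕ∞ :=
  hitTime fun t => x ≤ (C.numGe u i t : ℝ)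

/-- `T^κ`: the number of rounds until `|X_{≥ i}|` reaches `μ^κ` after the first point of
`X_{≥ i}` is visited. -/
noncomputable def Tkappa (u : ℝ) (i : ℕ) (κ : ℝ) : ℕ∞ :=
  C.tReach u i ((C.μ : ℝ) ^ κ) - C.tFirst u i

/-- `t_i`: the first round at which an individual of rank at least `i` exists. -/
noncomputable def tBirth (u : ℝ) (i : ℕ) : ℕ∞ := C.tFirst u i

/-- `T_i`: the round at which the last individual of rank at most `i` is eliminated, i.e. the
first round at which the whole population has rank larger than `i`. -/
noncomputable def tDie (u : ℝ) (i : ℕ) : ℕ∞ :=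
  hitTime fun t => ∀ j < C.μ, i < C.rk ((C.run u t j).1)

/-- The last round at which an individual of rank `i` is removed from the population. -/
noncomputable def lastDelTime (u : ℝ) (i : ℕ) : ℕ :=
  sSup {t : ℕ | C.rk (C.removedAt u t) = i}

/-- `Z_i`: the OneMax value of the last search point of rank `i` that the algorithm deletes
from its population (with `Z_i := Z_{i-1}` if no such point exists). -/
noncomputable def Z (u : ℝ) : ℕ → ℕ
  | 0 =>
    if ({t : ℕ | C.rk (C.removedAt u t) = 0}).Nonempty then
      OM (C.removedAt u (C.lastDelTime u 0))
    else 0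
  | i + 1 =>
    if ({t : ℕ | C.rk (C.removedAt u t) = i + 1}).Nonempty then
      OM (C.removedAt u (C.lastDelTime u (i + 1)))
    else Z u i

/-- Event `E_a`: no individual of rank at most `i-1` creates an offspring of rank at
least `i+1`. -/
def Ea (u : ℝ) (i : ℕ) : Prop :=
  ∀ t : ℕ, C.rk (C.parentAt u t).1 < i → C.rk (C.offspringAt u t) < i + 1

/-- The number of roots of the family forest `F_i`. -/
noncomputable def rootsCount (u : ℝ) (i : ℕ) : ℕ :=
  {v : V | C.validV v ∧ C.isRootIn u i v}.ncard

/-- Event `E_b`: there are at most `ε μ log³ μ` roots in `F_i`. -/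
def Eb (u : ℝ) (i : ℕ) (ε : ℝ) : Prop :=
  (C.rootsCount u i : ℝ) ≤ ε * C.μ * (Real.log C.μ) ^ 3

/-- Event `E_c`: no vertex of rank exactly `i` of depth at most `φ log μ` in `F_i` creates an
offspring of rank larger than `i`. -/
def Ec (u : ℝ) (i : ℕ) (φ : ℝ) : Prop :=
  ∀ t : ℕ, C.rk (C.parentAt u t).1 = i →
    (C.depthIn u i (C.parentAt u t).2 : ℝ) ≤ φ * Real.log C.μ →
    C.rk (C.offspringAt u t) ≤ i

/-- Event `E_d`: every vertex of rank `i` creating an offspring of rank at least `i+1` has a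
OneMax value at least `c_d log μ` below that of its root (if the root has OneMax value at least
`(1-8ε)n`), resp. OneMax value at most `(1-4ε)n` (if the root has OneMax value at most
`(1-8ε)n`); moreover the improving mutation changes at most `(c_d/2) log μ` bits. -/
def Ed (u : ℝ) (i : ℕ) (ε c_d : ℝ) : Prop :=
  ∀ t : ℕ, C.rk (C.parentAt u t).1 = i → i + 1 ≤ C.rk (C.offspringAt u t) →
    (((1 - 8 * ε) * n ≤ (OM (C.vpt u (C.rootIn u i (C.parentAt u t).2)) : ℝ) →
        (OM ((C.parentAt u t).1) : ℝ) ≤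
          (OM (C.vpt u (C.rootIn u i (C.parentAt u t).2)) : ℝ) - c_d * Real.log C.μ) ∧
      ((OM (C.vpt u (C.rootIn u i (C.parentAt u t).2)) : ℝ) ≤ (1 - 8 * ε) * n →
        (OM ((C.parentAt u t).1) : ℝ) ≤ (1 - 4 * ε) * n) ∧
      (hamming ((C.parentAt u t).1) (C.offspringAt u t) : ℝ) ≤ c_d / 2 * Real.log C.μ)

/-- Event `E_e`: no vertex of rank `i` has a OneMax value exceeding that of its root in `F_i`
by more than `c_e log μ`. -/
def Ee (u : ℝ) (i : ℕ) (c_e : ℝ) : Prop :=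
  ∀ v : V, C.validV v → C.rk (C.vpt u v) = i →
    (OM (C.vpt u v) : ℝ) ≤ (OM (C.vpt u (C.rootIn u i v)) : ℝ) + c_e * Real.log C.μ

/-- The good event `E_good(i) = E_a ∩ E_b ∩ E_c ∩ E_d ∩ E_e`. -/
def Egood (u : ℝ) (i : ℕ) (ε φ c_d c_e : ℝ) : Prop :=
  C.Ea u i ∧ C.Eb u i ε ∧ C.Ec u i φ ∧ C.Ed u i ε c_d ∧ C.Ee u i c_e

/-- The vertices of the family forest `F_i` present after `t` rounds, in creation order. -/
noncomputable def famVerts (u : ℝ) (i : ℕ) (t : ℕ) : List V :=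
  ((List.range C.μ).filter fun j => decide (i ≤ C.rk (C.pop₀ j))).map Sum.inl ++
  ((List.range t).filter fun s => decide (i ≤ C.rk (C.offspringAt u s))).map Sum.inr

/-- The family forest `F_i` after `t` rounds, as a list of parent pointers (in creation
order); `none` denotes a root. -/
noncomputable def famForest (u : ℝ) (i : ℕ) (t : ℕ) : List (Option ℕ) :=
  (C.famVerts u i t).map fun v =>
    match v with
    | Sum.inl _ => none
    | Sum.inr s =>
      if i ≤ C.rk (C.vpt u (C.parentAt u s).2) then
        some ((C.famVerts u i t).idxOf (C.parentAt u s).2)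
      else none

/-- The number of fitness function evaluations before the first evaluation of the all-ones
string (evaluations `0, ..., μ-1` are the initial population, evaluation `μ + t` is the
offspring of round `t`). -/
noncomputable def Topt (u : ℝ) : ℕ∞ :=
  hitTime fun k =>
    (k < C.μ ∧ C.pop₀ k = fun _ => true) ∨
    (C.μ ≤ k ∧ C.offspringAt u (k - C.μ) = fun _ => true)

end Cfg

/-- The trajectory of the random forest `F'`, driven by the uniform randomness of `u`
(tag `6`): round `0` has a single root; in each round each existing vertex spawns a child
with probability `1/μ` and a new root is added. -/
noncomputable def forestTraj (μ : ℕ) (u : ℝ) : ℕ → List (Option ℕ)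
  | 0 => [none]
  | t + 1 =>
    let s := forestTraj μ u t
    s ++ ((List.range s.length).filter fun k => decide (unifAt u 6 t k < 1 / (μ : ℝ))).map some
      ++ [none]

/-- `F` is contained in `G` as a subforest: there is an injection of the vertices of `F` into
those of `G` preserving the root/parent structure. -/
def IsSubforest (F G : List (Option ℕ)) : Prop :=
  ∃ ι : ℕ → ℕ,
    (∀ v < F.length, ι v < G.length) ∧
    (∀ v < F.length, ∀ w < F.length, ι v = ι w → v = w) ∧
    (∀ v < F.length, (F.getD v none).map ι = G.getD (ι v) none)

/-- The uniformly random initial population (tag `3`). -/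
noncomputable def initU (n : ℕ) (u : ℝ) : ℕ → Pt n :=
  fun j i => decide (unifAt u 3 j i.1 < (1 : ℝ) / 2)

/-- The linear auxiliary function `f_ℓ(x) = n · Σ_{j ∈ A} x_j + Σ_{j ∉ A} x_j`. -/
noncomputable def fL (n : ℕ) (A : Finset (Fin n)) : Pt n → ℝ :=
  fun x => (n : ℝ) * (onesIn A x : ℝ) + (onesIn Aᶜ x : ℝ)

/-- The standard `(μ+1)`-EA configuration on the linear function `f_ℓ` determined by the
hot topic `A`, with uniformly random initial population. -/
noncomputable def eaL (n μ : ℕ) (c : ℝ) (A : Finset (Fin n)) (u : ℝ) : Cfg n :=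
  ⟨μ, c, fL n A, initU n u, A⟩

/-- As `eaL`, but with prescribed initial population `pop₀`. -/
noncomputable def eaLFrom (n μ : ℕ) (c : ℝ) (A : Finset (Fin n)) (pop₀ : ℕ → Pt n) : Cfg n :=
  ⟨μ, c, fL n A, pop₀, A⟩

/-! ### The HotTopic function -/

section HT

variable (n L : ℕ) (ε : ℝ) (A B : ℕ → Finset (Fin n))

/-- The level `ℓ(x) = max {ℓ' ∈ [L] : d(B_{ℓ'}, x) ≤ ε}` (and `0` if no such `ℓ'` exists). -/
noncomputable def levelHT (x : Pt n) : ℕ :=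
  ((Finset.Icc 1 L).filter fun l => dens (B l) x ≤ ε).sup id

/-- Extension of the sets `A_l` by `A_{L+1} := ∅`. -/
def AextHT (l : ℕ) : Finset (Fin n) := if l ≤ L then A l else ∅

/-- The HotTopic function
`HT(x) = ℓ(x) n² + n Σ_{i ∈ A_{ℓ(x)+1}} x_i + Σ_{i ∈ R_{ℓ(x)+1}} x_i`. -/
noncomputable def HTf (x : Pt n) : ℕ :=
  levelHT n L ε B x * n ^ 2 +
    n * onesIn (AextHT n L A (levelHT n L ε B x + 1)) x +
    onesIn (AextHT n L A (levelHT n L ε B x + 1))ᶜ x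

end HT

/-- A uniformly random element of a list (given a uniform `r ∈ [0,1)`). -/
noncomputable def pickFromList {γ : Type*} [Inhabited γ] (l : List γ) (r : ℝ) : γ :=
  l.getD (pickN r l.length) default

/-- The random set `A_l`: a uniformly random subset of `[n]` of size `a` (tag `4`). -/
noncomputable def randA (n : ℕ) (a : ℕ) (u : ℝ) (l : ℕ) : Finset (Fin n) :=
  pickFromList ((Finset.univ.powersetCard a : Finset (Finset (Fin n))).toList) (unifAt u 4 l 0)

/-- The random set `B_l`: a uniformly random subset of `A_l` of size `b` (tag `5`). -/
noncomputable def randB (n : ℕ) (b : ℕ) (u : ℝ) (Al : Finset (Fin n)) (l : ℕ) : Finset (Fin n) :=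
  pickFromList ((Al.powersetCard b).toList) (unifAt u 5 l 0)

end EA

/-!
Write `a = rk x`, `k` for the number of zeros of `x` in `A`, and `p = c/n`. For a zero `j` of `x`
in `A`, flipping bit `j` of the offspring matches the offspring of rank `≥ r + 1` having `y j = 1`
with those of rank `≥ r` having `y j = 0`, and multiplies the probability by `(1 - p)/p`; an
offspring of rank `≥ a + t + 1` has at least `t + 1` such bits. Double counting gives
`(t + 1)(1 - p) Pr[rk y ≥ a + t + 1] ≤ k p Pr[rk y ≥ a + t]`.

Let `i = a + m` and `β = ε'αn`. If `k ≤ 2β(m + 1)(1 - p)`, one such step is the second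
alternative. Otherwise iterating gives `Pr[rk y ≥ i] ≤ (kp/(1 - p))^m / m!`, while
`k ≤ β + m` (from `i ≥ (1 - ε')αn`) and `k > 2β(m + 1)(1 - p)` with `p ≤ 1/5` (as
`2ec ≤ ε'n ≤ n`) force `β ≤ 1` and `kp/(1 - p) ≤ (m + 1)/4`; the bound is then at most
`1/2 ≤ 2^{-β}`.
-/

open scoped Nat
open Finset

lemma PMF.toMeasure_setOf_eq_sum {α : Type*} [Fintype α] [MeasurableSpace α]
    [MeasurableSingletonClass α] (P : PMF α) (p : α → Prop) [DecidablePred p] :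
    P.toMeasure {y | p y} = ∑ y with p y, P y := by
  rw [PMF.toMeasure_apply_fintype, sum_filter]
  exact sum_congr rfl fun y _ => Set.indicator_apply _ _ _

lemma ENNReal.le_ofReal_div_mul_of_ofReal_mul_le {a b : ℝ} (ha : 0 < a) {X Y : ℝ≥0∞}
    (h : ENNReal.ofReal a * X ≤ ENNReal.ofReal b * Y) : X ≤ ENNReal.ofReal (b / a) * Y := by
  rw [ENNReal.ofReal_div_of_pos ha, ← ENNReal.mul_div_right_comm,
    ENNReal.le_div_iff_mul_le (.inl (by simpa using ha)) (.inl ENNReal.ofReal_ne_top),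
    mul_comm]
  exact h

lemma succ_pow_le_four_mul_pow (N : ℕ) : (N + 1) ^ N ≤ 4 * N ^ N := by
  rcases N.eq_zero_or_pos with rfl | hN
  · norm_num
  have hE : Real.exp 1 ≤ 4 := by linarith [Real.exp_one_lt_d9]
  have hsplit : ((N : ℝ) + 1) = N * (1 + (N : ℝ)⁻¹) := by field_simp
  have h : ((N : ℝ) + 1) ^ N ≤ 4 * (N : ℝ) ^ N := by
    rw [hsplit, mul_pow, mul_comm]
    gcongr
    exact Real.one_add_inv_pow_le_exp.trans hE
  exact_mod_cast h

lemma two_mul_succ_pow_le_four_pow_mul_factorial {m : ℕ} (hm : 1 ≤ m) :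
    2 * (m + 1) ^ m ≤ 4 ^ m * m ! := by
  induction m, hm using Nat.le_induction with
  | base => norm_num
  | succ m _ ih =>
    calc 2 * (m + 1 + 1) ^ (m + 1) ≤ 2 * (4 * (m + 1) ^ (m + 1)) := by
          gcongr; exact succ_pow_le_four_mul_pow (m + 1)
      _ = 4 * (m + 1) * (2 * (m + 1) ^ m) := by ring
      _ ≤ 4 * (m + 1) * (4 ^ m * m !) := by gcongr
      _ = 4 ^ (m + 1) * (m + 1) ! := by rw [Nat.factorial_succ]; ring

lemma mul_pow_div_le_two_rpow_neg {β k p : ℝ} {m : ℕ} (hm : 1 ≤ m) (hk0 : 0 ≤ k)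
    (hk : k ≤ β + m) (hp0 : 0 ≤ p) (hp : p ≤ 1 / 5) (h : 2 * β * (m + 1) * (1 - p) < k) :
    (k * p) ^ m / (m ! * (1 - p) ^ m) ≤ 2 ^ (-β) := by
  have hmR : (1 : ℝ) ≤ m := by exact_mod_cast hm
  have hβ : β ≤ 1 := by
    by_contra! hβ
    have hpos : (0 : ℝ) ≤ 2 * (m + 1) * (1 - p) - 1 := by nlinarith
    nlinarith [mul_nonneg (sub_nonneg.2 hβ.le) hpos]
  have hkp : k * p / (1 - p) ≤ (m + 1) / 4 := by
    rw [div_le_div_iff₀ (by linarith) (by norm_num)]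
    nlinarith
  have hfact : 2 * ((m : ℝ) + 1) ^ m ≤ 4 ^ m * m ! := by
    exact_mod_cast two_mul_succ_pow_le_four_pow_mul_factorial hm
  calc (k * p) ^ m / (m ! * (1 - p) ^ m) = (k * p / (1 - p)) ^ m / m ! := by
        rw [div_pow, div_div, mul_comm ((1 - p) ^ m)]
    _ ≤ ((m + 1) / 4) ^ m / m ! := by
        gcongr
        exact div_nonneg (by positivity) (by linarith)
    _ ≤ 1 / 2 := by
        rw [div_pow, div_div, div_le_div_iff₀ (by positivity) (by norm_num)]
        linarith
    _ = 2 ^ (-1 : ℝ) := by norm_num [Real.rpow_neg_one]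
    _ ≤ 2 ^ (-β) := Real.rpow_le_rpow_of_exponent_le (by norm_num) (by linarith)

namespace EA

variable {n : ℕ}

noncomputable def flipProb (n : ℕ) (c : ℝ) : ℝ≥0∞ := min (ENNReal.ofReal (c / n)) 1

lemma bern_apply (p : ℝ≥0∞) (b : Bool) :
    bern p b = if b then min p 1 else 1 - min p 1 := by
  have hp : ((min p 1).toNNReal : ℝ≥0∞) = min p 1 :=
    ENNReal.coe_toNNReal (ne_top_of_le_ne_top ENNReal.one_ne_top (min_le_right p 1))
  cases b
  · change ((1 - (min p 1).toNNReal : ℝ≥0) : ℝ≥0∞) = _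
    simp [hp]
  · exact hp

lemma piBern_apply (k : ℕ) (p : ℝ≥0∞) (b : Fin k → Bool) :
    piBern k p b = ∏ i, bern p (b i) := by
  induction k with
  | zero => simp [piBern, PMF.pure_apply, Subsingleton.elim b (fun i => i.elim0)]
  | succ k ih =>
    have hcons (a : Bool) :
        (piBern k p).map (Fin.cons a) b = if b 0 = a then piBern k p (Fin.tail b) else 0 := by
      rw [PMF.map_apply, tsum_eq_single (Fin.tail b)]
      · split_ifs with h₁ h₂ h₂
        · rfl
        · exact absurd (by simpa using congrFun h₁ 0) h₂
        · exact absurd (by rw [← h₂, Fin.cons_self_tail]) h₁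
        · rfl
      · intro z hz
        rw [if_neg]
        rintro rfl
        simp at hz
    rw [piBern, PMF.bind_apply, tsum_eq_single (b 0), hcons, if_pos rfl, ih,
      Fin.prod_univ_succ]
    · rfl
    · intro a ha
      rw [hcons, if_neg (Ne.symm ha), mul_zero]

lemma mutPMF_apply (c : ℝ) (x y : Pt n) :
    mutPMF n c x y = ∏ i, if y i = x i then 1 - flipProb n c else flipProb n c := by
  rw [mutPMF, PMF.map_apply, tsum_eq_single (fun i => xor (x i) (y i))]
  · rw [if_pos (by funext i; simp), piBern_apply]
    refine prod_congr rfl fun i _ => ?_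
    rw [bern_apply, flipProb]
    cases x i <;> cases y i <;> rfl
  · intro b hb
    rw [if_neg]
    rintro rfl
    exact hb (funext fun i => by simp)

lemma mutPMF_update_mul (c : ℝ) (x y : Pt n) (j : Fin n) :
    (1 - flipProb n c) * mutPMF n c x (Function.update y j (!x j)) =
      flipProb n c * mutPMF n c x (Function.update y j (x j)) := by
  simp only [mutPMF_apply, ← mul_prod_erase _ _ (mem_univ j),
    Function.update_self, Bool.not_ne_self, if_false, if_true]
  have hrest : ∀ b, ∏ i ∈ Finset.univ.erase j,
      (if Function.update y j b i = x i then 1 - flipProb n c else flipProb n c) =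
      ∏ i ∈ Finset.univ.erase j, (if y i = x i then 1 - flipProb n c else flipProb n c) :=
    fun b => prod_congr rfl fun i hi => by
      rw [Function.update_of_ne (ne_of_mem_erase hi)]
  rw [hrest, hrest]
  ring

lemma flipProb_eq_ofReal {c : ℝ} (hp : c / n ≤ 1) : flipProb n c = ENNReal.ofReal (c / n) :=
  min_eq_left (ENNReal.ofReal_le_one.2 hp)

lemma one_sub_flipProb_eq_ofReal {c : ℝ} (hp0 : 0 ≤ c / n) (hp1 : c / n ≤ 1) :
    1 - flipProb n c = ENNReal.ofReal (1 - c / n) := by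
  rw [flipProb_eq_ofReal hp1, ENNReal.ofReal_sub _ hp0, ENNReal.ofReal_one]

lemma onesIn_update_true {A : Finset (Fin n)} {j : Fin n} (hj : j ∈ A) (y : Pt n) :
    onesIn A (Function.update y j true) = onesIn A (Function.update y j false) + 1 := by
  have hinsert : A.filter (fun i => Function.update y j true i = true) =
      insert j (A.filter fun i => Function.update y j false i = true) := by
    ext i
    by_cases h : i = j
    · subst h; simp [hj]
    · simp [h]
  rw [onesIn, onesIn, hinsert, card_insert_of_notMem (by simp)]

lemma onesIn_le_add_card_filter (A : Finset (Fin n)) (x y : Pt n) :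
    onesIn A y ≤ onesIn A x + #{j ∈ A.filter (x · = false) | y j = true} := by
  calc onesIn A y
      ≤ #(A.filter (x · = true) ∪ {j ∈ A.filter (x · = false) | y j = true}) := by
        refine card_le_card fun j hj => ?_
        cases hxj : x j <;> simp_all
    _ ≤ _ := card_union_le _ _

lemma onesIn_add_zerosIn (A : Finset (Fin n)) (x : Pt n) : onesIn A x + zerosIn A x = #A := by
  simpa [onesIn, zerosIn] using card_filter_add_card_filter_not (s := A) (x · = true)

lemma sum_onesIn_ge_succ_bit_true_eq (c : ℝ) {A : Finset (Fin n)} {x : Pt n} {j : Fin n}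
    (hj : j ∈ A) (hxj : x j = false) (r : ℕ) :
    ∑ y with r + 1 ≤ onesIn A y ∧ y j = true, (1 - flipProb n c) * mutPMF n c x y =
      ∑ y with r ≤ onesIn A y ∧ y j = false, flipProb n c * mutPMF n c x y := by
  have hrank := onesIn_update_true hj
  have hself : ∀ y : Pt n, Function.update y j (y j) = y := fun y => Function.update_eq_self j y
  refine sum_nbij' (Function.update · j false) (Function.update · j true) ?_ ?_ ?_ ?_ ?_
  · intro y hy
    simp only [mem_filter, mem_univ, true_and] at hy ⊢
    have := hrank y
    rw [← hy.2, hself] at this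
    simp only [Function.update_self, and_true]
    omega
  · intro z hz
    simp only [mem_filter, mem_univ, true_and] at hz ⊢
    have := hrank z
    rw [← hz.2, hself] at this
    simp only [Function.update_self, and_true]
    omega
  · intro y hy
    simp only [mem_filter, mem_univ, true_and] at hy
    simp [← hy.2]
  · intro z hz
    simp only [mem_filter, mem_univ, true_and] at hz
    simp [← hz.2]
  · intro y hy
    simp only [mem_filter, mem_univ, true_and] at hy
    have := mutPMF_update_mul c x y j
    rwa [hxj, Bool.not_false, ← hy.2, hself] at this

lemma succ_mul_toMeasure_onesIn_ge_succ_le (c : ℝ) (A : Finset (Fin n)) (x : Pt n) (t : ℕ) :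
    ((t + 1 : ℕ) : ℝ≥0∞) * (1 - flipProb n c) *
        (mutPMF n c x).toMeasure {y | onesIn A x + t + 1 ≤ onesIn A y} ≤
      zerosIn A x * flipProb n c *
        (mutPMF n c x).toMeasure {y | onesIn A x + t ≤ onesIn A y} := by
  set q := flipProb n c
  set P := mutPMF n c x
  set r := onesIn A x + t
  rw [PMF.toMeasure_setOf_eq_sum, PMF.toMeasure_setOf_eq_sum]
  calc ((t + 1 : ℕ) : ℝ≥0∞) * (1 - q) * ∑ y with r + 1 ≤ onesIn A y, P y
      ≤ ∑ y with r + 1 ≤ onesIn A y,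
          (#{j ∈ A.filter (x · = false) | y j = true} : ℝ≥0∞) * ((1 - q) * P y) := by
        rw [mul_sum]
        refine sum_le_sum fun y hy => ?_
        rw [mul_assoc]
        gcongr
        have := onesIn_le_add_card_filter A x y
        simp only [mem_filter, mem_univ, true_and] at hy
        omega
    _ = ∑ j ∈ A.filter (x · = false),
          ∑ y with r + 1 ≤ onesIn A y ∧ y j = true, (1 - q) * P y := by
        simp only [← nsmul_eq_mul, ← sum_const]
        exact sum_comm' fun y j => by simp only [mem_filter, mem_univ, true_and]; tauto
    _ = ∑ j ∈ A.filter (x · = false),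
          ∑ y with r ≤ onesIn A y ∧ y j = false, q * P y := by
        refine sum_congr rfl fun j hj => ?_
        simp only [mem_filter] at hj
        exact sum_onesIn_ge_succ_bit_true_eq c hj.1 hj.2 r
    _ ≤ ∑ j ∈ A.filter (x · = false), q * ∑ y with r ≤ onesIn A y, P y := by
        refine sum_le_sum fun j _ => ?_
        rw [mul_sum]
        exact sum_le_sum_of_subset fun y => by
          simp only [mem_filter, mem_univ, true_and]
          exact And.left
    _ = zerosIn A x * q * ∑ y with r ≤ onesIn A y, P y := by
        rw [sum_const, nsmul_eq_mul, mul_assoc]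
        rfl

lemma factorial_mul_toMeasure_onesIn_ge_add_le (c : ℝ) (A : Finset (Fin n)) (x : Pt n) (t : ℕ) :
    (t ! : ℝ≥0∞) * (1 - flipProb n c) ^ t *
        (mutPMF n c x).toMeasure {y | onesIn A x + t ≤ onesIn A y} ≤
      (zerosIn A x * flipProb n c) ^ t := by
  induction t with
  | zero => simpa using prob_le_one (μ := (mutPMF n c x).toMeasure)
  | succ t ih =>
    calc ((t + 1) ! : ℝ≥0∞) * (1 - flipProb n c) ^ (t + 1) *
          (mutPMF n c x).toMeasure {y | onesIn A x + (t + 1) ≤ onesIn A y}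
        = (t ! * (1 - flipProb n c) ^ t) * (((t + 1 : ℕ) : ℝ≥0∞) * (1 - flipProb n c) *
          (mutPMF n c x).toMeasure {y | onesIn A x + t + 1 ≤ onesIn A y}) := by
          rw [Nat.factorial_succ, Nat.cast_mul, ← add_assoc]
          ring
      _ ≤ (t ! * (1 - flipProb n c) ^ t) * (zerosIn A x * flipProb n c *
          (mutPMF n c x).toMeasure {y | onesIn A x + t ≤ onesIn A y}) :=
          mul_le_mul_right (succ_mul_toMeasure_onesIn_ge_succ_le c A x t) _
      _ = zerosIn A x * flipProb n c * (t ! * (1 - flipProb n c) ^ t *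
          (mutPMF n c x).toMeasure {y | onesIn A x + t ≤ onesIn A y}) := by ring
      _ ≤ zerosIn A x * flipProb n c * (zerosIn A x * flipProb n c) ^ t :=
          mul_le_mul_right ih _
      _ = (zerosIn A x * flipProb n c) ^ (t + 1) := by ring

lemma toMeasure_onesIn_ge_succ_le {c : ℝ} (hp0 : 0 ≤ c / n) (hp1 : c / n < 1)
    (A : Finset (Fin n)) (x : Pt n) (t : ℕ) :
    (mutPMF n c x).toMeasure {y | onesIn A x + t + 1 ≤ onesIn A y} ≤
      ENNReal.ofReal (zerosIn A x * (c / n) / ((t + 1) * (1 - c / n))) *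
        (mutPMF n c x).toMeasure {y | onesIn A x + t ≤ onesIn A y} := by
  have hq := flipProb_eq_ofReal hp1.le
  have hq' := one_sub_flipProb_eq_ofReal hp0 hp1.le
  refine ENNReal.le_ofReal_div_mul_of_ofReal_mul_le (mul_pos (by positivity) (by linarith)) ?_
  have := succ_mul_toMeasure_onesIn_ge_succ_le c A x t
  rwa [hq', hq, ← ENNReal.ofReal_natCast, ← ENNReal.ofReal_mul (by positivity),
    ← ENNReal.ofReal_natCast, ← ENNReal.ofReal_mul (by positivity), Nat.cast_add_one] at this

lemma toMeasure_onesIn_ge_add_le {c : ℝ} (hp0 : 0 ≤ c / n) (hp1 : c / n < 1)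
    (A : Finset (Fin n)) (x : Pt n) (t : ℕ) :
    (mutPMF n c x).toMeasure {y | onesIn A x + t ≤ onesIn A y} ≤
      ENNReal.ofReal ((zerosIn A x * (c / n)) ^ t / (t ! * (1 - c / n) ^ t)) := by
  have hq := flipProb_eq_ofReal hp1.le
  have hq' := one_sub_flipProb_eq_ofReal hp0 hp1.le
  have h1p : 0 < 1 - c / n := by linarith
  have h := factorial_mul_toMeasure_onesIn_ge_add_le c A x t
  rw [hq', hq, ← ENNReal.ofReal_natCast, ← ENNReal.ofReal_pow h1p.le,
    ← ENNReal.ofReal_mul (by positivity), ← ENNReal.ofReal_natCast,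
    ← ENNReal.ofReal_mul (by positivity), ← ENNReal.ofReal_pow (by positivity)] at h
  simpa only [mul_one] using
    ENNReal.le_ofReal_div_mul_of_ofReal_mul_le (Y := 1) (by positivity) (by rwa [mul_one])

end EA

theorem rank_jump_alternative_general (α c ε' : ℝ) (hc : 0 < c)
    (n : ℕ) (A : Finset (Fin n)) (hA : (A.card : ℝ) = α * n)
    (hε1 : ε' < 1) (hεn : 2 * Real.exp 1 * c ≤ ε' * n)
    (i : ℕ) (hi1 : (1 - ε') * α * n ≤ (i : ℝ))
    (x : EA.Pt n) (hx : EA.onesIn A x < i) :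
    (EA.mutPMF n c x).toMeasure {y | i ≤ EA.onesIn A y} ≤
        ENNReal.ofReal ((2 : ℝ) ^ (-(ε' * α * n))) ∨
      (EA.mutPMF n c x).toMeasure {y | i + 1 ≤ EA.onesIn A y} ≤
        ENNReal.ofReal (2 * ε' * α * c) *
          (EA.mutPMF n c x).toMeasure {y | i ≤ EA.onesIn A y} := by
  have hn : (0 : ℝ) < n := by
    rcases n.eq_zero_or_pos with rfl | hn
    · nlinarith [Real.exp_pos 1]
    · exact_mod_cast hn
  have hp0 : 0 ≤ c / n := by positivity
  have hp : c / n ≤ 1 / 5 := by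
    rw [div_le_div_iff₀ hn (by norm_num)]
    nlinarith [Real.exp_one_gt_d9]
  have hcn : c = c / n * n := by field_simp
  obtain ⟨m, rfl⟩ : ∃ m, i = EA.onesIn A x + m := ⟨i - EA.onesIn A x, by omega⟩
  have hk : (EA.zerosIn A x : ℝ) = α * n - EA.onesIn A x := by
    rw [← hA, ← EA.onesIn_add_zerosIn A x]
    push_cast
    ring
  by_cases h : (EA.zerosIn A x : ℝ) ≤ 2 * (ε' * α * n) * (m + 1) * (1 - c / n)
  · right
    refine (EA.toMeasure_onesIn_ge_succ_le hp0 (by linarith) A x m).trans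
      (mul_le_mul_left (ENNReal.ofReal_le_ofReal ?_) _)
    rw [div_le_iff₀ (mul_pos (by positivity) (by linarith))]
    linear_combination (c / n) * h - 2 * ε' * α * (m + 1) * (1 - c / n) * hcn
  · left
    push_cast at hi1
    exact (EA.toMeasure_onesIn_ge_add_le hp0 (by linarith) A x m).trans <|
      ENNReal.ofReal_le_ofReal <|
        mul_pow_div_le_two_rpow_neg (by omega) (by positivity) (by nlinarith) hp0 hp (not_le.1 h)

/-- Let `α, c > 0`, `A ⊆ [n]` with `|A| = αn`, `x ∈ {0,1}ⁿ`. Let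
`(1-ε')αn ≤ i ≤ αn` with `0 < ε' < 1` and `ε'n ≥ 2ec`. With `rk z = |{j ∈ A : z_j = 1}|` and
`y` obtained from `x` by standard bit mutation with rate `c/n`: if `rk x < i`, then
`Pr[rk y ≥ i] ≤ 2^{-ε'αn}` or `Pr[rk y ≥ i+1] ≤ 2ε'αc · Pr[rk y ≥ i]`. -/
theorem rank_jump_alternative (α c ε' : ℝ) (hα : 0 < α) (hc : 0 < c)
    (n : ℕ) (A : Finset (Fin n)) (hA : (A.card : ℝ) = α * n)
    (hε0 : 0 < ε') (hε1 : ε' < 1) (hεn : 2 * Real.exp 1 * c ≤ ε' * n)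
    (i : ℕ) (hi1 : (1 - ε') * α * n ≤ (i : ℝ)) (hi2 : (i : ℝ) ≤ α * n)
    (x : EA.Pt n) (hx : EA.onesIn A x < i) :
    (EA.mutPMF n c x).toMeasure {y | i ≤ EA.onesIn A y} ≤
        ENNReal.ofReal ((2 : ℝ) ^ (-(ε' * α * n))) ∨
      (EA.mutPMF n c x).toMeasure {y | i + 1 ≤ EA.onesIn A y} ≤
        ENNReal.ofReal (2 * ε' * α * c) *
          (EA.mutPMF n c x).toMeasure {y | i ≤ EA.onesIn A y} :=
  rank_jump_alternative_general α c ε' hc n A hA hε1 hεn i hi1 x hx
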